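/- Let G = (V,E) be a finite simple graph, let v ∈ V be a simplicial vertex of G, and let n ≥ 2 be an integer. Then C(I_n(G)) ≤ max{ C(I_n(G \ v)), C(I_{n−1}(G[V \ N_G[v]])) + 1 }. -/

import Mathlib

namespace PaperKL

open Finset

variable {V : Type*}

section Complexes
variable [DecidableEq V]

/-- A (finite) abstract simplicial complex: a family of finite sets closed under
taking subsets. -/
def IsSimplicialComplex (X : Finset (Finset V)) : Prop :=
  ∀ σ ∈ X, ∀ τ ⊆ σ, τ ∈ X

/-- `σ` is a free face of `X`, with `τ` the unique maximal face of `X` containing it: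
equivalently, every face of `X` containing `σ` is contained in `τ`. -/
def IsFreeFace (X : Finset (Finset V)) (σ τ : Finset V) : Prop :=
  σ ∈ X ∧ τ ∈ X ∧ σ ⊆ τ ∧ ∀ η ∈ X, σ ⊆ η → η ⊆ τ

/-- `Y` is obtained from `X` by an elementary `d`-collapse. -/
def ElemCollapse (d : ℕ) (X Y : Finset (Finset V)) : Prop :=
  ∃ σ τ : Finset V, IsFreeFace X σ τ ∧ σ.card ≤ d ∧
    Y = X.filter fun η => ¬(σ ⊆ η ∧ η ⊆ τ)

/-- `X` is `d`-collapsible: some sequence of elementary `d`-collapses reduces `X`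
to the void complex `∅`. -/
def Collapsible (d : ℕ) (X : Finset (Finset V)) : Prop :=
  Relation.ReflTransGen (ElemCollapse d) X ∅

/-- The collapsibility number `C(X)`: the minimum `d` such that `X` is `d`-collapsible. -/
noncomputable def collapseNum (X : Finset (Finset V)) : ℕ :=
  sInf {d | Collapsible d X}

/-- The link `lk(X, τ) = {η ∈ X : η ∩ τ = ∅, η ∪ τ ∈ X}`. -/
def link (X : Finset (Finset V)) (τ : Finset V) : Finset (Finset V) :=
  X.filter fun η => η ∩ τ = ∅ ∧ η ∪ τ ∈ X

/-- Deletion of a vertex: `X \ v`. -/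
def deleteVert (X : Finset (Finset V)) (v : V) : Finset (Finset V) :=
  X.filter fun σ => v ∉ σ

/-- The induced subcomplex on the complement of `S`: `X[V \ S]`. -/
def deleteSet (X : Finset (Finset V)) (S : Finset V) : Finset (Finset V) :=
  X.filter fun σ => σ ∩ S = ∅

/-- The vertex set of a complex: the union of its faces. -/
def vertexSet (X : Finset (Finset V)) : Finset V := X.sup id

/-- The join `X ∗ Y = {σ ∪ τ : σ ∈ X, τ ∈ Y}`. -/
def joinSC (X Y : Finset (Finset V)) : Finset (Finset V) :=
  (X ×ˢ Y).image fun p => p.1 ∪ p.2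

/-- `τ` is a maximal face of `X`. -/
def IsMaximalFace (X : Finset (Finset V)) (τ : Finset V) : Prop :=
  τ ∈ X ∧ ∀ η ∈ X, τ ⊆ η → η = τ

/-- `X` is a cone over `v`: every maximal face of `X` contains `v`. -/
def IsConeOver (X : Finset (Finset V)) (v : V) : Prop :=
  ∀ τ, IsMaximalFace X τ → v ∈ τ

/-- A missing face of `X`: a subset of the vertex set which is not a face,
all of whose proper subsets are faces. -/
def IsMissingFace (X : Finset (Finset V)) (τ : Finset V) : Prop :=
  τ ⊆ vertexSet X ∧ τ ∉ X ∧ ∀ σ ⊂ τ, σ ∈ X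

end Complexes

/-- A finset is an independent set in the graph `G`. -/
def IsIndepSet (G : SimpleGraph V) (s : Finset V) : Prop :=
  ∀ u ∈ s, ∀ v ∈ s, ¬ G.Adj u v

section Graphs
variable [DecidableEq V]

/-- The complex `I_n(G[W])` of the induced subgraph `G[W]`, realized as the family of
subsets `U ⊆ W` such that `U` contains no independent set of `G` of size `n`. -/
noncomputable def indComplexOn (G : SimpleGraph V) (W : Finset V) (n : ℕ) :
    Finset (Finset V) :=
  @Finset.filter _ (fun U => ¬ ∃ I ⊆ U, I.card = n ∧ IsIndepSet G I)
    (Classical.decPred _) W.powerset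

variable [Fintype V]

/-- The complex `I_n(G)`: subsets of `V` containing no independent set of size `n`. -/
noncomputable def indComplex (G : SimpleGraph V) (n : ℕ) : Finset (Finset V) :=
  indComplexOn G Finset.univ n

/-- The open neighborhood of `v` as a finset. -/
noncomputable def nbrsFinset (G : SimpleGraph V) (v : V) : Finset V :=
  @Finset.filter _ (fun u => G.Adj v u) (Classical.decPred _) Finset.univ

/-- Filter of a finset by an arbitrary predicate (classical decidability). -/
noncomputable def cfilter (p : V → Prop) (s : Finset V) : Finset V :=
  @Finset.filter _ p (Classical.decPred _) s

end Graphs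

/-- `G` has maximum degree at most `Δ`. -/
def MaxDegLE (G : SimpleGraph V) (Δ : ℕ) : Prop :=
  ∀ v : V, (G.neighborSet v).ncard ≤ Δ

/-- `G` is claw-free: it has no induced subgraph isomorphic to `K_{1,3}`. -/
def ClawFree (G : SimpleGraph V) : Prop :=
  ¬ ∃ a b c d : V, b ≠ c ∧ b ≠ d ∧ c ≠ d ∧
    G.Adj a b ∧ G.Adj a c ∧ G.Adj a d ∧ ¬G.Adj b c ∧ ¬G.Adj b d ∧ ¬G.Adj c d

/-- `G` is chordal: it has no induced cycle of length at least 4. -/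
def IsChordal (G : SimpleGraph V) : Prop :=
  ∀ m : ℕ, 4 ≤ m → ¬ ∃ f : ZMod m → V, Function.Injective f ∧
    ∀ i j : ZMod m, G.Adj (f i) (f j) ↔ (j = i + 1 ∨ i = j + 1)

/-- `v` is a simplicial vertex of `G`: its closed neighborhood is a clique. -/
def IsSimplicialVertex (G : SimpleGraph V) (v : V) : Prop :=
  ∀ a b : V, G.Adj v a → G.Adj v b → a ≠ b → G.Adj a b

/-- The connected component of `v` in `G` is a path: its vertices can be enumerated
as `f 0, …, f m` with adjacency exactly between consecutive vertices. -/
def InPathComponent (G : SimpleGraph V) (v : V) : Prop :=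
  ∃ (m : ℕ) (f : Fin (m + 1) → V), Function.Injective f ∧
    (∀ w, G.Reachable v w ↔ ∃ i, f i = w) ∧
    (∀ i j : Fin (m + 1), G.Adj (f i) (f j) ↔ ((i : ℕ) + 1 = (j : ℕ) ∨ (j : ℕ) + 1 = (i : ℕ)))

/-- The collection `A 0, …, A (t-1)` of independent sets of `G` admits a rainbow
independent set of size `n`: there are indices `g 0 < ⋯ < g (n-1)` and distinct
vertices `a j ∈ A (g j)` forming an independent set of `G`. -/
def HasRainbowIndepSet [DecidableEq V] (G : SimpleGraph V) (n : ℕ) {t : ℕ} (A : Fin t → Finset V) : Prop :=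
  ∃ (g : Fin n → Fin t) (a : Fin n → V), StrictMono g ∧ Function.Injective a ∧
    (∀ j, a j ∈ A (g j)) ∧ IsIndepSet G (Finset.image a Finset.univ)

section FGraphs
variable [DecidableEq V] [Fintype V]

/-- `f_G(n)`: the minimum `t` such that every collection of `t` independent sets of
size `n` in `G` has a rainbow independent set of size `n`. -/
noncomputable def fRainbow (G : SimpleGraph V) (n : ℕ) : ℕ :=
  sInf {t | ∀ A : Fin t → Finset V,
    (∀ i, IsIndepSet G (A i) ∧ (A i).card = n) → HasRainbowIndepSet G n A}

/-- The independence number `α(G)`. -/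
noncomputable def indepNum (G : SimpleGraph V) : ℕ :=
  (@Finset.filter _ (fun s => IsIndepSet G s) (Classical.decPred _)
    (Finset.univ : Finset V).powerset).sup Finset.card

end FGraphs

/-!
Splitting the faces of `X = I_n(G)` according to whether they contain `v` writes `X` as the
deletion `X \ v = I_n(G \ v)` together with the cone `v ∗ lk(X, v)`. A `d`-collapse of the link
lifts to a `(d + 1)`-collapse of `X` onto `X \ v`, by adding `v` to every free pair, so
`C(X) ≤ max (C(X \ v), C(lk(X, v)) + 1)`. Since `N_G[v]` is a clique, an independent set meets it
in at most one vertex, whence `lk(X, v)` is the join of `I_{n-1}(G[V \ N_G[v]])` with the full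
simplex on `N_G(v)`; joining with a simplex does not increase the collapsibility number, because
every free pair `σ ⊆ τ` of the first factor gives the free pair `σ ⊆ τ ∪ N_G(v)` of the join.
-/

section Collapsibility

variable [DecidableEq V] {d e : ℕ} {X Y : Finset (Finset V)}

lemma ElemCollapse.subset (h : ElemCollapse d X Y) : Y ⊆ X := by
  obtain ⟨σ, τ, -, -, rfl⟩ := h
  exact filter_subset _ _

lemma ElemCollapse.mono (hde : d ≤ e) (h : ElemCollapse d X Y) : ElemCollapse e X Y := by
  obtain ⟨σ, τ, hfree, hcard, rfl⟩ := h
  exact ⟨σ, τ, hfree, hcard.trans hde, rfl⟩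

lemma Collapsible.mono (hde : d ≤ e) (h : Collapsible d X) : Collapsible e X :=
  Relation.ReflTransGen.mono (fun _ _ => ElemCollapse.mono hde) X ∅ h

lemma elemCollapse_erase {τ : Finset V} (hτ : IsMaximalFace X τ) (hd : #τ ≤ d) :
    ElemCollapse d X (X.erase τ) := by
  refine ⟨τ, τ, ⟨hτ.1, hτ.1, subset_rfl, fun η hη hτη => (hτ.2 η hη hτη).le⟩, hd, ?_⟩
  ext η
  rw [mem_erase, mem_filter, ← Subset.antisymm_iff, eq_comm, and_comm]

lemma collapsible_of_forall_card_le (hX : ∀ τ ∈ X, #τ ≤ d) : Collapsible d X := by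
  induction X using Finset.strongInduction with
  | _ X ih =>
    obtain rfl | hne := X.eq_empty_or_nonempty
    · exact .refl
    obtain ⟨τ, hτ, hmax⟩ := X.exists_max_image card hne
    have hτmax : IsMaximalFace X τ :=
      ⟨hτ, fun η hη hτη => (eq_of_subset_of_card_le hτη (hmax η hη)).symm⟩
    exact .head (elemCollapse_erase hτmax (hX τ hτ))
      (ih _ (erase_ssubset hτ) fun η hη => hX η (mem_of_mem_erase hη))

lemma collapsible_collapseNum (X : Finset (Finset V)) : Collapsible (collapseNum X) X :=
  Nat.sInf_mem (s := {d | Collapsible d X})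
    ⟨_, collapsible_of_forall_card_le fun _ hτ => le_sup (f := card) hτ⟩

lemma collapseNum_le (h : Collapsible d X) : collapseNum X ≤ d :=
  Nat.sInf_le h

lemma ReflTransGen.elemCollapse_map {P : Finset V → Prop}
    {f : Finset (Finset V) → Finset (Finset V)}
    (hf : ∀ X Y, (∀ σ ∈ X, P σ) → ElemCollapse d X Y → ElemCollapse e (f X) (f Y))
    (hX : ∀ σ ∈ X, P σ) (h : Relation.ReflTransGen (ElemCollapse d) X Y) :
    Relation.ReflTransGen (ElemCollapse e) (f X) (f Y) := by
  induction h using Relation.ReflTransGen.head_induction_on with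
  | refl => exact .refl
  | head hstep _ ih => exact .head (hf _ _ hX hstep) (ih fun σ hσ => hX σ (hstep.subset hσ))

end Collapsibility

section Join

variable [DecidableEq V] {d : ℕ} {Y Y' : Finset (Finset V)} {S : Finset V}

lemma mem_joinSC_powerset (hY : ∀ σ ∈ Y, Disjoint σ S) {η : Finset V} :
    η ∈ joinSC Y S.powerset ↔ η \ S ∈ Y := by
  simp only [joinSC, mem_image, mem_product, mem_powerset, Prod.exists]
  constructor
  · rintro ⟨σ, s, ⟨hσ, hs⟩, rfl⟩
    rwa [union_sdiff_distrib, sdiff_eq_empty_iff_subset.2 hs, union_empty,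
      sdiff_eq_self_of_disjoint (hY σ hσ)]
  · exact fun h => ⟨η \ S, η ∩ S, ⟨h, inter_subset_right⟩, sdiff_union_inter η S⟩

lemma ElemCollapse.joinSC_powerset (hY : ∀ σ ∈ Y, Disjoint σ S) (h : ElemCollapse d Y Y') :
    ElemCollapse d (joinSC Y S.powerset) (joinSC Y' S.powerset) := by
  obtain ⟨σ, τ, ⟨hσ, hτ, hστ, hfree⟩, hcard, rfl⟩ := h
  have hY' : ∀ ρ ∈ Y.filter fun η => ¬(σ ⊆ η ∧ η ⊆ τ), Disjoint ρ S :=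
    fun ρ hρ => hY ρ (mem_filter.1 hρ).1
  have hσ_sub (η : Finset V) : σ ⊆ η \ S ↔ σ ⊆ η := by
    rw [subset_sdiff, and_iff_left (hY σ hσ)]
  have hsub_τ (η : Finset V) : η \ S ⊆ τ ↔ η ⊆ τ ∪ S := by
    rw [union_comm]; exact sdiff_le_iff
  refine ⟨σ, τ ∪ S, ⟨?_, ?_, hστ.trans subset_union_left, ?_⟩, hcard, ?_⟩
  · rwa [mem_joinSC_powerset hY, sdiff_eq_self_of_disjoint (hY σ hσ)]
  · rwa [mem_joinSC_powerset hY, union_sdiff_right, sdiff_eq_self_of_disjoint (hY τ hτ)]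
  · intro η hη hση
    rw [mem_joinSC_powerset hY] at hη
    exact (hsub_τ η).1 (hfree _ hη ((hσ_sub η).2 hση))
  · ext η
    rw [mem_joinSC_powerset hY', mem_filter, mem_filter, mem_joinSC_powerset hY, hσ_sub, hsub_τ]

lemma Collapsible.joinSC_powerset (hY : ∀ σ ∈ Y, Disjoint σ S) (h : Collapsible d Y) :
    Collapsible d (joinSC Y S.powerset) := by
  simpa [Collapsible, joinSC] using ReflTransGen.elemCollapse_map (f := (joinSC · S.powerset))
    (fun _ _ => ElemCollapse.joinSC_powerset) hY h

lemma collapseNum_joinSC_powerset_le (hY : ∀ σ ∈ Y, Disjoint σ S) :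
    collapseNum (joinSC Y S.powerset) ≤ collapseNum Y :=
  collapseNum_le ((collapsible_collapseNum Y).joinSC_powerset hY)

end Join

section Cone

variable [DecidableEq V] {d : ℕ} {X D L L' : Finset (Finset V)} {v : V}

lemma ElemCollapse.union_image_insert (hD : ∀ σ ∈ D, v ∉ σ) (hL : ∀ σ ∈ L, v ∉ σ)
    (h : ElemCollapse d L L') :
    ElemCollapse (d + 1) (D ∪ L.image (insert v)) (D ∪ L'.image (insert v)) := by
  obtain ⟨σ, τ, ⟨hσ, hτ, hστ, hfree⟩, hcard, rfl⟩ := h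
  have hvσ : v ∉ σ := hL σ hσ
  have hD_avoid : ∀ η ∈ D, ¬insert v σ ⊆ η := fun η hη h => hD η hη (h (mem_insert_self v σ))
  refine ⟨insert v σ, insert v τ, ⟨?_, ?_, insert_subset_insert v hστ, ?_⟩,
    (card_insert_le v σ).trans (by omega), ?_⟩
  · exact mem_union_right _ (mem_image_of_mem _ hσ)
  · exact mem_union_right _ (mem_image_of_mem _ hτ)
  · intro η hη hση
    obtain hη | ⟨ρ, hρ, rfl⟩ := mem_union.1 hη |>.imp_right mem_image.1
    · exact absurd hση (hD_avoid η hη)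
    · rw [insert_subset_insert_iff hvσ] at hση
      exact insert_subset_insert v (hfree ρ hρ hση)
  · rw [filter_union, filter_image, filter_true_of_mem fun η hη => not_and_of_not_left _
      (hD_avoid η hη)]
    congr 2
    refine filter_congr fun ρ hρ => ?_
    rw [insert_subset_insert_iff hvσ, insert_subset_insert_iff (hL ρ hρ)]

lemma reflTransGen_union_image_insert (hD : ∀ σ ∈ D, v ∉ σ) (hL : ∀ σ ∈ L, v ∉ σ)
    (h : Collapsible d L) :
    Relation.ReflTransGen (ElemCollapse (d + 1)) (D ∪ L.image (insert v)) D := by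
  simpa using ReflTransGen.elemCollapse_map (f := fun L => D ∪ L.image (insert v))
    (fun _ _ hL => ElemCollapse.union_image_insert hD hL) hL h

lemma mem_link_singleton (hX : IsSimplicialComplex X) {η : Finset V} :
    η ∈ link X {v} ↔ v ∉ η ∧ insert v η ∈ X := by
  rw [link, mem_filter, ← disjoint_iff_inter_eq_empty, disjoint_singleton_right, union_singleton]
  exact ⟨fun h => h.2, fun h => ⟨hX _ h.2 η (subset_insert v η), h⟩⟩

lemma IsSimplicialComplex.deleteVert_union_image_insert_link (hX : IsSimplicialComplex X)
    (v : V) : deleteVert X v ∪ (link X {v}).image (insert v) = X := by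
  ext η
  simp only [deleteVert, mem_union, mem_filter, mem_image, mem_link_singleton hX]
  constructor
  · rintro (⟨hη, -⟩ | ⟨ρ, ⟨-, hρ⟩, rfl⟩) <;> assumption
  · intro hη
    by_cases hvη : v ∈ η
    · exact .inr ⟨η.erase v, ⟨notMem_erase v η, by rwa [insert_erase hvη]⟩, insert_erase hvη⟩
    · exact .inl ⟨hη, hvη⟩

theorem IsSimplicialComplex.collapseNum_le_max_deleteVert_link (hX : IsSimplicialComplex X)
    (v : V) :
    collapseNum X ≤ max (collapseNum (deleteVert X v)) (collapseNum (link X {v}) + 1) := by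
  have hcone := reflTransGen_union_image_insert (D := deleteVert X v)
    (fun _ hσ => (mem_filter.1 hσ).2) (fun _ hσ => ((mem_link_singleton hX).1 hσ).1)
    (collapsible_collapseNum (link X {v}))
  rw [hX.deleteVert_union_image_insert_link] at hcone
  exact collapseNum_le <| .trans
    (Relation.ReflTransGen.mono (fun _ _ => ElemCollapse.mono (le_max_right _ _)) _ _ hcone)
    ((collapsible_collapseNum _).mono (le_max_left _ _))

end Cone

section IndependenceComplex

variable {G : SimpleGraph V}

lemma IsIndepSet.subset {s t : Finset V} (ht : IsIndepSet G t) (hst : s ⊆ t) : IsIndepSet G s :=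
  fun u hu w hw => ht u (hst hu) w (hst hw)

lemma mem_indComplexOn {W U : Finset V} {m : ℕ} :
    U ∈ indComplexOn G W m ↔ U ⊆ W ∧ ¬∃ I ⊆ U, #I = m ∧ IsIndepSet G I := by
  unfold indComplexOn
  simp only [mem_filter, mem_powerset]

lemma isSimplicialComplex_indComplexOn (W : Finset V) (m : ℕ) :
    IsSimplicialComplex (indComplexOn G W m) := by
  intro σ hσ τ hτσ
  rw [mem_indComplexOn] at hσ ⊢
  exact ⟨hτσ.trans hσ.1, fun ⟨I, hI, hI'⟩ => hσ.2 ⟨I, hI.trans hτσ, hI'⟩⟩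

lemma mem_nbrsFinset [Fintype V] {v u : V} : u ∈ nbrsFinset G v ↔ G.Adj v u := by
  simp [nbrsFinset]

variable [DecidableEq V]

lemma IsIndepSet.insert {s : Finset V} {v : V} (hs : IsIndepSet G s)
    (hv : ∀ u ∈ s, ¬G.Adj v u) : IsIndepSet G (insert v s) := by
  intro a ha b hb
  rw [mem_insert] at ha hb
  rcases ha with rfl | ha <;> rcases hb with rfl | hb
  · exact G.irrefl
  · exact hv b hb
  · exact fun h => hv a ha h.symm
  · exact hs a ha b hb

lemma disjoint_of_mem_indComplexOn_sdiff_insert {W T σ : Finset V} {m : ℕ} {v : V}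
    (hσ : σ ∈ indComplexOn G (W \ insert v T) m) : Disjoint σ T :=
  (subset_sdiff.1 (mem_indComplexOn.1 hσ).1).2.mono_right (subset_insert v T)

variable [Fintype V]

lemma deleteVert_indComplex (n : ℕ) (v : V) :
    deleteVert (indComplex G n) v = indComplexOn G (univ \ {v}) n := by
  ext η
  rw [deleteVert, mem_filter, indComplex, mem_indComplexOn, mem_indComplexOn,
    ← compl_eq_univ_sdiff, subset_compl_singleton]
  exact ⟨fun ⟨⟨_, h⟩, hv⟩ => ⟨hv, h⟩, fun ⟨hv, h⟩ => ⟨⟨subset_univ η, h⟩, hv⟩⟩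

variable {v : V}

lemma IsSimplicialVertex.adj_of_mem_insert_nbrsFinset (hv : IsSimplicialVertex G v) {a b : V}
    (ha : a ∈ insert v (nbrsFinset G v)) (hb : b ∈ insert v (nbrsFinset G v)) (hab : a ≠ b) :
    G.Adj a b := by
  rw [mem_insert, mem_nbrsFinset] at ha hb
  rcases ha with rfl | ha <;> rcases hb with rfl | hb
  · exact absurd rfl hab
  · exact hb
  · exact ha.symm
  · exact hv a b ha hb hab

/-- An independent set meets the clique `N_G[v]` in at most one vertex. -/
lemma IsSimplicialVertex.exists_indep_insert_iff (hv : IsSimplicialVertex G v) {σ : Finset V}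
    (hvσ : v ∉ σ) (n : ℕ) :
    (∃ I ⊆ insert v σ, #I = n ∧ IsIndepSet G I) ↔
      ∃ J ⊆ σ \ nbrsFinset G v, #J = n - 1 ∧ IsIndepSet G J := by
  set N := insert v (nbrsFinset G v)
  constructor
  · rintro ⟨I, hIσ, hI, hind⟩
    obtain ⟨J, hJI, hJ, hJN⟩ : ∃ J ⊆ I, #J = n - 1 ∧ ∀ x ∈ J, x ∉ N := by
      by_cases hIN : ∃ u ∈ I, u ∈ N
      · obtain ⟨u, huI, huN⟩ := hIN
        refine ⟨I.erase u, erase_subset u I, by rw [card_erase_of_mem huI, hI], ?_⟩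
        intro x hx hxN
        have hxu := ne_of_mem_erase hx
        exact hind u huI x (mem_of_mem_erase hx) (hv.adj_of_mem_insert_nbrsFinset huN hxN hxu.symm)
      · obtain ⟨J, hJI, hJ⟩ := exists_subset_card_eq (show n - 1 ≤ #I by omega)
        exact ⟨J, hJI, hJ, fun x hx hxN => hIN ⟨x, hJI hx, hxN⟩⟩
    refine ⟨J, fun x hx => ?_, hJ, hind.subset hJI⟩
    have hxN := hJN x hx
    rw [mem_insert, not_or] at hxN
    exact mem_sdiff.2 ⟨(mem_insert.1 (hIσ (hJI hx))).resolve_left hxN.1, hxN.2⟩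
  · rintro ⟨J, hJσ, hJ, hind⟩
    have hvJ : v ∉ J := fun h => hvσ (mem_sdiff.1 (hJσ h)).1
    have hindv : IsIndepSet G (insert v J) :=
      hind.insert fun u hu => mt mem_nbrsFinset.2 (mem_sdiff.1 (hJσ hu)).2
    obtain ⟨I, hIJ, hI⟩ :=
      exists_subset_card_eq (show n ≤ #(insert v J) by rw [card_insert_of_notMem hvJ]; omega)
    exact ⟨I, hIJ.trans (insert_subset_insert v (hJσ.trans sdiff_subset)), hI, hindv.subset hIJ⟩

lemma IsSimplicialVertex.link_indComplex (hv : IsSimplicialVertex G v) (n : ℕ) :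
    link (indComplex G n) {v} =
      joinSC (indComplexOn G (univ \ insert v (nbrsFinset G v)) (n - 1))
        (nbrsFinset G v).powerset := by
  have hvS : v ∉ nbrsFinset G v := fun h => G.irrefl (mem_nbrsFinset.1 h)
  ext η
  rw [indComplex, mem_link_singleton (isSimplicialComplex_indComplexOn _ _),
    mem_joinSC_powerset fun _ => disjoint_of_mem_indComplexOn_sdiff_insert,
    mem_indComplexOn, mem_indComplexOn]
  have hsub : η \ nbrsFinset G v ⊆ univ \ insert v (nbrsFinset G v) ↔ v ∉ η := by
    simp [subset_sdiff, disjoint_insert_right, sdiff_disjoint, hvS]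
  rw [hsub]
  exact and_congr_right fun hvη => by
    rw [and_iff_right (subset_univ _), hv.exists_indep_insert_iff hvη]

end IndependenceComplex

theorem collapseNum_indComplex_le_of_simplicialVertex_general {V : Type*} [DecidableEq V]
    [Fintype V] (G : SimpleGraph V) (v : V) (hv : IsSimplicialVertex G v)
    (n : ℕ) :
    collapseNum (indComplex G n) ≤
      max (collapseNum (indComplexOn G (Finset.univ \ {v}) n))
        (collapseNum
          (indComplexOn G (Finset.univ \ insert v (nbrsFinset G v)) (n - 1)) + 1) := by
  calc collapseNum (indComplex G n)
      ≤ max (collapseNum (deleteVert (indComplex G n) v))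
          (collapseNum (link (indComplex G n) {v}) + 1) :=
        (isSimplicialComplex_indComplexOn univ n).collapseNum_le_max_deleteVert_link v
    _ ≤ _ := by
      rw [deleteVert_indComplex, hv.link_indComplex]
      gcongr
      exact collapseNum_joinSC_powerset_le fun _ => disjoint_of_mem_indComplexOn_sdiff_insert

/-- If `v` is a simplicial vertex of `G` and `n ≥ 2`, then
`C(I_n(G)) ≤ max { C(I_n(G \ v)), C(I_{n-1}(G[V \ N_G[v]])) + 1 }`. -/
theorem collapseNum_indComplex_le_of_simplicialVertex {V : Type*} [DecidableEq V]
    [Fintype V] (G : SimpleGraph V) (v : V) (hv : IsSimplicialVertex G v)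
    (n : ℕ) (hn : 2 ≤ n) :
    collapseNum (indComplex G n) ≤
      max (collapseNum (indComplexOn G (Finset.univ \ {v}) n))
        (collapseNum
          (indComplexOn G (Finset.univ \ insert v (nbrsFinset G v)) (n - 1)) + 1) :=
  collapseNum_indComplex_le_of_simplicialVertex_general G v hv n

end PaperKL
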